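/- arXiv:1706.05173 — 2 statements merged into one kernel-verified Lean document; each statement's English description precedes it below -/
import Mathlib

section
/- Let I ⊂ ℝ be a compact interval and let f, g: I → ℝ be bounded functions admitting least concave majorants on I. Then sup_{x∈I} |[CM_I f](x) − [CM_I g](x)| ≤ sup_{x∈I} |f(x) − g(x)|. Consequently, sup_{x∈I} |[D_I(f + g)](x) − [D_I f](x)| ≤ 2 sup_{x∈I} |g(x)|. -/
open MeasureTheory ProbabilityTheory Filter Set Topology

noncomputable section

/-- The least concave majorant `CM_I h` of `h` on `I` (pointwise infimum of all concave
functions on `I` lying above `h` on `I`). -/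
def CMaj (I : Set ℝ) (h : ℝ → ℝ) : ℝ → ℝ := fun x =>
  sInf {y | ∃ g : ℝ → ℝ, ConcaveOn ℝ I g ∧ (∀ z ∈ I, h z ≤ g z) ∧ g x = y}

/-- `g` is the least concave majorant of `h` on `I`. -/
def IsLeastConcaveMajorant (I : Set ℝ) (h g : ℝ → ℝ) : Prop :=
  ConcaveOn ℝ I g ∧ (∀ x ∈ I, h x ≤ g x) ∧
    ∀ g' : ℝ → ℝ, ConcaveOn ℝ I g' → (∀ x ∈ I, h x ≤ g' x) → ∀ x ∈ I, g x ≤ g' x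

/-- A standard Brownian motion indexed by `ℝ`; when the index set is all of `ℝ` this is a
standard two-sided Brownian motion originating from zero. -/
def IsBrownianMotion {Ω : Type*} [MeasurableSpace Ω] (P : Measure Ω)
    (W : ℝ → Ω → ℝ) : Prop :=
  (∀ ω, W 0 ω = 0) ∧ (∀ ω, Continuous fun t => W t ω) ∧ (∀ t, Measurable (W t)) ∧
  (∀ s t : ℝ, s ≤ t →
    Measure.map (fun ω => W t ω - W s ω) P = gaussianReal 0 (Real.toNNReal (t - s))) ∧
  (∀ (k : ℕ) (u : Fin (k + 1) → ℝ), Monotone u →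
    iIndepFun
      (fun i : Fin k => fun ω => W (u i.succ) ω - W (u i.castSucc) ω) P)

/-- A Brownian bridge on `[0,1]`. -/
def IsBrownianBridge {Ω : Type*} [MeasurableSpace Ω] (P : Measure Ω)
    (B : ℝ → Ω → ℝ) : Prop :=
  ∃ W : ℝ → Ω → ℝ, IsBrownianMotion P W ∧ ∀ t ω, B t ω = W t ω - t * W 1 ω

/-- The Brownian version `Λₙᵂ(t) = Λ(t) + n^{-1/2} Wₙ(L(t))` with `Wₙ(u) = Bₙ(u) + ξₙ u`. -/
def LamW {Ω : Type*} (Λ L : ℝ → ℝ) (Bn : ℕ → ℝ → Ω → ℝ) (ξ : ℕ → Ω → ℝ)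
    (n : ℕ) (t : ℝ) (ω : Ω) : ℝ :=
  Λ t + (n : ℝ) ^ (-(1:ℝ)/2) * (Bn n (L t) ω + ξ n ω * L t)

/-- `Aₙ(t) = n^{2/3} (CM_{[0,1]} Λₙ − Λₙ)(t)` (empirical version, `AₙE = Aₙ`). -/
def AnE {Ω : Type*} (Λn : ℕ → ℝ → Ω → ℝ) (n : ℕ) (t : ℝ) (ω : Ω) : ℝ :=
  (n : ℝ) ^ ((2:ℝ)/3) * (CMaj (Icc 0 1) (fun s => Λn n s ω) t - Λn n t ω)

/-- `Aₙᵂ(t) = n^{2/3} (CM_{[0,1]} Λₙᵂ − Λₙᵂ)(t)` (Brownian version). -/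
def AnW {Ω : Type*} (Λ L : ℝ → ℝ) (Bn : ℕ → ℝ → Ω → ℝ) (ξ : ℕ → Ω → ℝ)
    (n : ℕ) (t : ℝ) (ω : Ω) : ℝ :=
  (n : ℝ) ^ ((2:ℝ)/3) *
    (CMaj (Icc 0 1) (fun s => LamW Λ L Bn ξ n s ω) t - LamW Λ L Bn ξ n t ω)

/-- `ζ = CM_ℝ Z − Z`, where `Z(t) = W(t) − t²`. -/
def zetaProc {Ω' : Type*} (W : ℝ → Ω' → ℝ) (ω : Ω') (s : ℝ) : ℝ :=
  CMaj univ (fun u => W u ω - u ^ 2) s - (W s ω - s ^ 2)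

/-- `Y_{nt}(s) = n^{1/6}(Wₙ(L(t+n^{-1/3}s)) − Wₙ(L(t))) + (1/2) λ'(t) s²`. -/
def Ynt {Ω : Type*} (lam' L : ℝ → ℝ) (Bn : ℕ → ℝ → Ω → ℝ) (ξ : ℕ → Ω → ℝ)
    (n : ℕ) (t s : ℝ) (ω : Ω) : ℝ :=
  (n : ℝ) ^ ((1:ℝ)/6) *
    ((Bn n (L (t + (n:ℝ) ^ (-(1:ℝ)/3) * s)) ω + ξ n ω * L (t + (n:ℝ) ^ (-(1:ℝ)/3) * s))
      - (Bn n (L t) ω + ξ n ω * L t))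
  + (1/2) * lam' t * s ^ 2

/-- Convergence in distribution of a sequence of (cadlag) processes to a process with
continuous paths, phrased via bounded functionals that are continuous for the topology of
uniform convergence on compact sets; for limits with continuous paths this coincides with
convergence in distribution in the Skorokhod space `D(ℝ)`. -/
def TendstoInDistrD {Ω Ω' : Type*} [MeasurableSpace Ω] [MeasurableSpace Ω']
    (P : Measure Ω) (X : ℕ → ℝ → Ω → ℝ) (Q : Measure Ω') (Y : ℝ → Ω' → ℝ) : Prop :=
  ∀ g : UniformOnFun ℝ ℝ {K : Set ℝ | IsCompact K} → ℝ,
    Continuous g → (∃ M, ∀ f, |g f| ≤ M) →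
    Tendsto
      (fun n => ∫ ω, g (UniformOnFun.ofFun {K : Set ℝ | IsCompact K} fun s => X n s ω) ∂P)
      atTop
      (𝓝 (∫ ω, g (UniformOnFun.ofFun {K : Set ℝ | IsCompact K} fun s => Y s ω) ∂Q))


/-- On a compact interval, taking least concave majorants is a sup-norm contraction:
`sup_I |CM_I f − CM_I g| ≤ sup_I |f − g|`; consequently
`sup_I |D_I(f+g) − D_I f| ≤ 2 sup_I |g|`. -/
theorem statement12
    (a b : ℝ) (hab : a ≤ b) (f g F G FG : ℝ → ℝ)
    (hfbdd : ∃ M, ∀ x ∈ Icc a b, |f x| ≤ M)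
    (hgbdd : ∃ M, ∀ x ∈ Icc a b, |g x| ≤ M)
    (hF : IsLeastConcaveMajorant (Icc a b) f F)
    (hG : IsLeastConcaveMajorant (Icc a b) g G)
    (hFG : IsLeastConcaveMajorant (Icc a b) (fun x => f x + g x) FG) :
    (⨆ x : Icc a b, |F (x:ℝ) - G (x:ℝ)|) ≤ (⨆ x : Icc a b, |f (x:ℝ) - g (x:ℝ)|) ∧
    (⨆ x : Icc a b, |(FG (x:ℝ) - (f (x:ℝ) + g (x:ℝ))) - (F (x:ℝ) - f (x:ℝ))|)
      ≤ 2 * ⨆ x : Icc a b, |g (x:ℝ)| := by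
  haveI : Nonempty (Icc a b) := (nonempty_Icc.2 hab).to_subtype
  obtain ⟨Mf, hMf⟩ := hfbdd
  obtain ⟨Mg, hMg⟩ := hgbdd
  have key : ∀ (p q P Q : ℝ → ℝ) (c : ℝ),
      IsLeastConcaveMajorant (Icc a b) p P → IsLeastConcaveMajorant (Icc a b) q Q →
      (∀ y ∈ Icc a b, p y ≤ q y + c) → ∀ x ∈ Icc a b, P x ≤ Q x + c := by
    intro p q P Q c hP hQ h x hx
    exact hP.2.2 (fun y => Q y + c)
      (hQ.1.add (concaveOn_const c (convex_Icc a b)))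
      (fun y hy => (h y hy).trans (by linarith [hQ.2.1 y hy])) x hx
  have hbdd : BddAbove (range fun x : Icc a b => |f (x:ℝ) - g (x:ℝ)|) := by
    refine ⟨Mf + Mg, ?_⟩
    rintro _ ⟨x, rfl⟩
    calc |f (x:ℝ) - g (x:ℝ)| ≤ |f (x:ℝ)| + |g (x:ℝ)| := abs_sub _ _
      _ ≤ Mf + Mg := add_le_add (hMf _ x.2) (hMg _ x.2)
  have hbddg : BddAbove (range fun x : Icc a b => |g (x:ℝ)|) :=
    ⟨Mg, by rintro _ ⟨x, rfl⟩; exact hMg _ x.2⟩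
  set c1 := ⨆ x : Icc a b, |f (x:ℝ) - g (x:ℝ)| with hc1
  set c2 := ⨆ x : Icc a b, |g (x:ℝ)| with hc2
  have hle1 : ∀ y ∈ Icc a b, |f y - g y| ≤ c1 := fun y hy =>
    le_ciSup hbdd (⟨y, hy⟩ : Icc a b)
  have hle2 : ∀ y ∈ Icc a b, |g y| ≤ c2 := fun y hy =>
    le_ciSup hbddg (⟨y, hy⟩ : Icc a b)
  constructor
  · refine ciSup_le fun x => ?_
    have h1 : F (x:ℝ) ≤ G (x:ℝ) + c1 :=
      key f g F G c1 hF hG (fun y hy => by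
        have := hle1 y hy; rw [abs_le] at this; linarith [this.1]) x x.2
    have h2 : G (x:ℝ) ≤ F (x:ℝ) + c1 :=
      key g f G F c1 hG hF (fun y hy => by
        have := hle1 y hy; rw [abs_le] at this; linarith [this.2]) x x.2
    rw [abs_le]; constructor <;> linarith
  · refine ciSup_le fun x => ?_
    have h1 : FG (x:ℝ) ≤ F (x:ℝ) + c2 :=
      key (fun y => f y + g y) f FG F c2 hFG hF (fun y hy => by
        have := hle2 y hy; rw [abs_le] at this; linarith [this.2]) x x.2
    have h2 : F (x:ℝ) ≤ FG (x:ℝ) + c2 :=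
      key f (fun y => f y + g y) F FG c2 hF hFG (fun y hy => by
        have := hle2 y hy; rw [abs_le] at this; linarith [this.1]) x x.2
    have h3 := hle2 x x.2
    rw [abs_le] at h3 ⊢
    constructor <;> linarith
end
end

section
/- Let f: [0,1] → ℝ be a bounded function and let Λ: [0,1] → ℝ be concave. Then for every t ∈ [0,1], 0 ≤ [CM_{[0,1]} f](t) − f(t) ≤ 2 sup_{s∈[0,1]} |f(s) − Λ(s)|. -/
open MeasureTheory ProbabilityTheory Filter Set Topology

noncomputable section

/-- If `f` is bounded on `[0,1]` and `Λ` is concave on `[0,1]`, then for every `t ∈ [0,1]`,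
`0 ≤ [CM_{[0,1]} f](t) − f(t) ≤ 2 sup_{s∈[0,1]} |f(s) − Λ(s)|`. -/
theorem statement13
    (f Lam F : ℝ → ℝ)
    (hf : ∃ M, ∀ x ∈ Icc (0:ℝ) 1, |f x| ≤ M)
    (hLam : ConcaveOn ℝ (Icc 0 1) Lam)
    (hF : IsLeastConcaveMajorant (Icc 0 1) f F) :
    ∀ t ∈ Icc (0:ℝ) 1,
      0 ≤ F t - f t ∧ F t - f t ≤ 2 * ⨆ s : Icc (0:ℝ) 1, |f (s:ℝ) - Lam (s:ℝ)| := by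
  obtain ⟨M, hM⟩ := hf
  have h01 : (0:ℝ) ∈ Icc (0:ℝ) 1 := by norm_num
  have h11 : (1:ℝ) ∈ Icc (0:ℝ) 1 := by norm_num
  set lo : ℝ := min (Lam 0) (Lam 1) with hlo_def
  -- lower bound for Lam on [0,1]
  have hlow : ∀ x ∈ Icc (0:ℝ) 1, lo ≤ Lam x := by
    intro x hx
    have h := hLam.2 h01 h11 (show (0:ℝ) ≤ 1 - x by linarith [hx.2])
      (show (0:ℝ) ≤ x from hx.1) (show (1 - x) + x = 1 by ring)
    simp only [smul_eq_mul, mul_zero, mul_one, zero_add] at h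
    rcases min_le_iff.mpr (Or.inl (le_refl (Lam 0))) with _
    have h1 : lo ≤ Lam 0 := min_le_left _ _
    have h2 : lo ≤ Lam 1 := min_le_right _ _
    nlinarith [hx.1, hx.2]
  -- upper bound for Lam on [0,1]
  set hi : ℝ := 2 * Lam (1/2) - lo with hhi_def
  have hupp : ∀ x ∈ Icc (0:ℝ) 1, Lam x ≤ hi := by
    intro x hx
    have hx' : (1 - x) ∈ Icc (0:ℝ) 1 := ⟨by linarith [hx.2], by linarith [hx.1]⟩
    have h := hLam.2 hx hx' (show (0:ℝ) ≤ 1/2 by norm_num)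
      (show (0:ℝ) ≤ 1/2 by norm_num) (show (1/2:ℝ) + 1/2 = 1 by norm_num)
    simp only [smul_eq_mul] at h
    have hmid : (1/2 : ℝ) * x + 1/2 * (1 - x) = 1/2 := by ring
    rw [hmid] at h
    have := hlow _ hx'
    simp only [hhi_def]
    linarith
  -- boundedness of |f - Lam| on [0,1]
  set B : ℝ := M + (|lo| + |hi|) with hB_def
  have hbd : ∀ x ∈ Icc (0:ℝ) 1, |f x - Lam x| ≤ B := by
    intro x hx
    have h1 := hlow x hx
    have h2 := hupp x hx
    have h3 := hM x hx
    have h4 : |Lam x| ≤ |lo| + |hi| := by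
      rw [abs_le]
      constructor
      · have := neg_abs_le lo
        have := abs_nonneg hi
        linarith
      · have := le_abs_self hi
        have := abs_nonneg lo
        linarith
    calc |f x - Lam x| ≤ |f x| + |Lam x| := abs_sub _ _
      _ ≤ B := by simp only [hB_def]; linarith
  have hbdd : BddAbove (Set.range fun s : Icc (0:ℝ) 1 => |f (s:ℝ) - Lam (s:ℝ)|) := by
    refine ⟨B, ?_⟩
    rintro y ⟨⟨s, hs⟩, rfl⟩
    exact hbd s hs
  set S : ℝ := ⨆ s : Icc (0:ℝ) 1, |f (s:ℝ) - Lam (s:ℝ)| with hS_def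
  have hub : ∀ s ∈ Icc (0:ℝ) 1, |f s - Lam s| ≤ S := by
    intro s hs
    exact le_ciSup hbdd ⟨s, hs⟩
  -- Lam + S is a concave majorant of f on [0,1]
  have hgconc : ConcaveOn ℝ (Icc (0:ℝ) 1) (fun x => Lam x + S) :=
    hLam.add (concaveOn_const _ (convex_Icc 0 1))
  have hgmaj : ∀ x ∈ Icc (0:ℝ) 1, f x ≤ Lam x + S := by
    intro x hx
    have h1 := hub x hx
    have h2 := le_abs_self (f x - Lam x)
    linarith
  intro t ht
  refine ⟨sub_nonneg.mpr (hF.2.1 t ht), ?_⟩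
  have hFle : F t ≤ Lam t + S := hF.2.2 _ hgconc hgmaj t ht
  have h1 := hub t ht
  have h2 := neg_abs_le (f t - Lam t)
  linarith
end
end
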